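/- Let n > 1, 0 < β < 1, r > 0, and reals R_H, X, B₁, L, u, p, with D* = (1-p)(R_H - B₁ + X) + pL and D^s.aut = (1 - p/n)(R_H - 2ru) + (p/n)L, and suppose βB₁ + R_H + X - B₁ - L + ((1-β)/(n-1))(X + 2ru - B₁) > 0. Then β(1-p)B₁ - (1-D*) ≥ β(1 - p/n)(X + 2ru) - (1 - D^s.aut) if and only if p ≤ (1-β)·(n/(n-1))·(2ru + X - B₁) / (R_H + X - L - B₁ + βB₁ + ((1-β)/(n-1))(X + 2ru - B₁)). (Safe-autarky threshold p^s.aut.) -/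

import Mathlib

/-! Contagious-system payoff minus safe-autarky payoff is affine in `p`, equal to
`((n - 1) / n) * (N - p * A)` with `N` the numerator and `A > 0` the denominator of the
threshold, so it is nonnegative exactly when `p ≤ N / A`. -/

lemma sub_mul_nonneg_iff_le_div {N A c p : ℝ} (hA : 0 < A) (hc : 0 < c) :
    0 ≤ (N - p * A) * c ↔ p ≤ N / A := by
  rw [mul_nonneg_iff_of_pos_right hc, sub_nonneg, le_div_iff₀ hA]

lemma contagious_sub_safe_autarky_payoff (n β r R_H X B₁ L u p : ℝ) (hn0 : n ≠ 0)
    (hn1 : n - 1 ≠ 0) :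
    (β * (1 - p) * B₁ - (1 - ((1 - p) * (R_H - B₁ + X) + p * L))) -
        (β * (1 - p / n) * (X + 2 * r * u) -
          (1 - ((1 - p / n) * (R_H - 2 * r * u) + (p / n) * L))) =
      ((1 - β) * (n / (n - 1)) * (2 * r * u + X - B₁) -
          p * (R_H + X - L - B₁ + β * B₁ + ((1 - β) / (n - 1)) * (X + 2 * r * u - B₁))) *
        ((n - 1) / n) := by
  field_simp
  ring

theorem stmt_8_general (n β r R_H X B₁ L u p Dstar Dsaut : ℝ)
    (hn : n > 1)
    (hDstar : Dstar = (1 - p) * (R_H - B₁ + X) + p * L)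
    (hDsaut : Dsaut = (1 - p / n) * (R_H - 2 * r * u) + (p / n) * L)
    (hden : β * B₁ + R_H + X - B₁ - L + ((1 - β) / (n - 1)) * (X + 2 * r * u - B₁) > 0) :
    β * (1 - p) * B₁ - (1 - Dstar) ≥ β * (1 - p / n) * (X + 2 * r * u) - (1 - Dsaut) ↔
      p ≤ (1 - β) * (n / (n - 1)) * (2 * r * u + X - B₁) /
        (R_H + X - L - B₁ + β * B₁ + ((1 - β) / (n - 1)) * (X + 2 * r * u - B₁)) := by
  have hn0 : (0 : ℝ) < n := by linarith
  have hn1 : (0 : ℝ) < n - 1 := by linarith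
  rw [ge_iff_le, ← sub_nonneg, hDstar, hDsaut,
    contagious_sub_safe_autarky_payoff n β r R_H X B₁ L u p hn0.ne' hn1.ne']
  exact sub_mul_nonneg_iff_le_div (by linarith) (div_pos hn1 hn0)

theorem stmt_8 (n β r R_H X B₁ L u p Dstar Dsaut : ℝ)
    (hn : n > 1) (hβ0 : 0 < β) (hβ1 : β < 1) (hr : r > 0)
    (hDstar : Dstar = (1 - p) * (R_H - B₁ + X) + p * L)
    (hDsaut : Dsaut = (1 - p / n) * (R_H - 2 * r * u) + (p / n) * L)
    (hden : β * B₁ + R_H + X - B₁ - L + ((1 - β) / (n - 1)) * (X + 2 * r * u - B₁) > 0) :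
    β * (1 - p) * B₁ - (1 - Dstar) ≥ β * (1 - p / n) * (X + 2 * r * u) - (1 - Dsaut) ↔
      p ≤ (1 - β) * (n / (n - 1)) * (2 * r * u + X - B₁) /
        (R_H + X - L - B₁ + β * B₁ + ((1 - β) / (n - 1)) * (X + 2 * r * u - B₁)) :=
  stmt_8_general n β r R_H X B₁ L u p Dstar Dsaut hn hDstar hDsaut hden
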